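/- Suppose v₁ and v₂ satisfy the subsystem dissipation constraints for subsystems 1 and 2 respectively, and suppose w_r : ℝ² × ℝᵐ → ℝ satisfies: w_r(π(ζ), k) ≥ 1 for every (t, ζ, k) ∈ [0,T] × Z × K such that v₁(t, proj₁(ζ), k) ≤ 0 and v₂(t, proj₂(ζ), k) ≤ 0. Then the forward reachable set of the full decomposed system is contained in the 1-superlevel set of w_r: for every k ∈ K, every admissible trajectory ζ of the full system, and every τ ∈ [0,T], one has w_r(π(ζ(τ)), k) ≥ 1. -/

import Mathlib

/-!
Along a full trajectory `ζ` with disturbance `d = (d₁, d₂, d_s)`, the path `(proj_i ζ)` is a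
trajectory of the self-contained subsystem `i` with disturbance `(d_i, d_s)`. The dissipation
constraint makes `t ↦ v_i (t, proj_i ζ t, k)` nonincreasing, so it stays `≤ v_i (0, ·, k) ≤ 0`,
and the hypothesis on `w_r` applies at every time. Since `d` is only measurable, trajectories are
merely Lipschitz: the chain rule holds almost everywhere (Lebesgue differentiation), and
monotonicity comes from the fundamental theorem of calculus for absolutely continuous functions.
-/

open Set MeasureTheory intervalIntegral

/-- An admissible trajectory of the full decomposed (self-contained-subsystem) system for
parameter `k`.  The full state is `ζ = (z₁, z₂, z_s)` with `z₁ : Fin (n₁+1) → ℝ`,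
`z₂ : Fin (n₂+1) → ℝ`, `z_s : Fin ns → ℝ` (the sizes `n₁+1, n₂+1` encode `n₁, n₂ ≥ 1`).
Absolute continuity with a.e. derivative
`f(t,ζ,k) + g(t,ζ,k) ∘ d(t)` is encoded by the componentwise integral representation,
with a measurable disturbance `d` valued in `[-1,1]` componentwise. -/
def IsAdmissibleFull {n₁ n₂ ns m : ℕ} (T : ℝ)
    (Z Z₀ : Set ((Fin (n₁+1) → ℝ) × (Fin (n₂+1) → ℝ) × (Fin ns → ℝ)))
    (f₁ g₁ : ℝ × (Fin (n₁+1) → ℝ) × (Fin ns → ℝ) × (Fin m → ℝ) → (Fin (n₁+1) → ℝ))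
    (f₂ g₂ : ℝ × (Fin (n₂+1) → ℝ) × (Fin ns → ℝ) × (Fin m → ℝ) → (Fin (n₂+1) → ℝ))
    (fs gs : ℝ × (Fin ns → ℝ) × (Fin m → ℝ) → (Fin ns → ℝ))
    (k : Fin m → ℝ)
    (ζ : ℝ → (Fin (n₁+1) → ℝ) × (Fin (n₂+1) → ℝ) × (Fin ns → ℝ)) : Prop :=
  (∀ t ∈ Icc (0:ℝ) T, ζ t ∈ Z) ∧ ζ 0 ∈ Z₀ ∧
  ∃ d : ℝ → (Fin (n₁+1) → ℝ) × (Fin (n₂+1) → ℝ) × (Fin ns → ℝ),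
    Measurable d ∧
    (∀ t i, (d t).1 i ∈ Icc (-1:ℝ) 1) ∧
    (∀ t i, (d t).2.1 i ∈ Icc (-1:ℝ) 1) ∧
    (∀ t i, (d t).2.2 i ∈ Icc (-1:ℝ) 1) ∧
    (∀ i, IntervalIntegrable (fun τ =>
      f₁ (τ, (ζ τ).1, (ζ τ).2.2, k) i + g₁ (τ, (ζ τ).1, (ζ τ).2.2, k) i * (d τ).1 i)
      volume 0 T) ∧
    (∀ i, IntervalIntegrable (fun τ =>
      f₂ (τ, (ζ τ).2.1, (ζ τ).2.2, k) i + g₂ (τ, (ζ τ).2.1, (ζ τ).2.2, k) i * (d τ).2.1 i)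
      volume 0 T) ∧
    (∀ i, IntervalIntegrable (fun τ =>
      fs (τ, (ζ τ).2.2, k) i + gs (τ, (ζ τ).2.2, k) i * (d τ).2.2 i) volume 0 T) ∧
    (∀ t ∈ Icc (0:ℝ) T, ∀ i, (ζ t).1 i = (ζ 0).1 i + ∫ τ in (0:ℝ)..t,
      (f₁ (τ, (ζ τ).1, (ζ τ).2.2, k) i + g₁ (τ, (ζ τ).1, (ζ τ).2.2, k) i * (d τ).1 i)) ∧
    (∀ t ∈ Icc (0:ℝ) T, ∀ i, (ζ t).2.1 i = (ζ 0).2.1 i + ∫ τ in (0:ℝ)..t,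
      (f₂ (τ, (ζ τ).2.1, (ζ τ).2.2, k) i + g₂ (τ, (ζ τ).2.1, (ζ τ).2.2, k) i * (d τ).2.1 i)) ∧
    (∀ t ∈ Icc (0:ℝ) T, ∀ i, (ζ t).2.2 i = (ζ 0).2.2 i + ∫ τ in (0:ℝ)..t,
      (fs (τ, (ζ τ).2.2, k) i + gs (τ, (ζ τ).2.2, k) i * (d τ).2.2 i))

/-- `v_i` satisfies the subsystem dissipation constraints for the subsystem with own
dynamics `(fi, gi)` and shared dynamics `(fs, gs)`, on `[0,T] × Zi × K` with initial set
`Z0i`. -/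
def SubsysDissipation {ni ns m : ℕ} (T : ℝ)
    (Zi Z0i : Set ((Fin ni → ℝ) × (Fin ns → ℝ))) (K : Set (Fin m → ℝ))
    (fi gi : ℝ × (Fin ni → ℝ) × (Fin ns → ℝ) × (Fin m → ℝ) → (Fin ni → ℝ))
    (fs gs : ℝ × (Fin ns → ℝ) × (Fin m → ℝ) → (Fin ns → ℝ))
    (vi : ℝ × ((Fin ni → ℝ) × (Fin ns → ℝ)) × (Fin m → ℝ) → ℝ) : Prop :=
  ContDiff ℝ 1 vi ∧
  (∀ t ∈ Icc (0:ℝ) T, ∀ zi : Fin ni → ℝ, ∀ zs : Fin ns → ℝ, (zi, zs) ∈ Zi →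
    ∀ k ∈ K, ∀ δi : Fin ni → ℝ, ∀ δs : Fin ns → ℝ,
    (∀ i, δi i ∈ Icc (-1:ℝ) 1) → (∀ i, δs i ∈ Icc (-1:ℝ) 1) →
    fderiv ℝ vi (t, (zi, zs), k)
      (1, ((fun i => fi (t, zi, zs, k) i + gi (t, zi, zs, k) i * δi i),
           (fun i => fs (t, zs, k) i + gs (t, zs, k) i * δs i)), 0) ≤ 0) ∧
  (∀ z ∈ Z0i, ∀ k ∈ K, vi (0, z, k) ≤ 0)

open scoped NNReal

lemma IntervalIntegrable.of_mem_Icc {E : Type*} [NormedAddCommGroup E] {F : ℝ → E} {a b t : ℝ}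
    (hF : IntervalIntegrable F volume a b) (ht : t ∈ Icc a b) : IntervalIntegrable F volume a t :=
  hF.mono_set (uIcc_subset_uIcc left_mem_uIcc (Icc_subset_uIcc ht))

section Primitive

variable {E : Type*} [NormedAddCommGroup E] [NormedSpace ℝ E] {y F : ℝ → E} {a b : ℝ}

lemma continuousOn_of_eq_add_integral (hF : IntervalIntegrable F volume a b)
    (hy : ∀ t ∈ Icc a b, y t = y a + ∫ τ in a..t, F τ) : ContinuousOn y (Icc a b) :=
  (continuousOn_const.add ((continuousOn_primitive_interval' hF left_mem_uIcc).mono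
    Icc_subset_uIcc)).congr hy

lemma lipschitzOnWith_of_eq_add_integral {M : ℝ≥0} (hF : IntervalIntegrable F volume a b)
    (hFM : ∀ t ∈ Icc a b, ‖F t‖ ≤ M) (hy : ∀ t ∈ Icc a b, y t = y a + ∫ τ in a..t, F τ) :
    LipschitzOnWith M y (Icc a b) := by
  refine LipschitzOnWith.of_dist_le_mul fun t ht s hs => ?_
  rw [dist_eq_norm, hy t ht, hy s hs, add_sub_add_left_eq_sub, Real.dist_eq,
    integral_interval_sub_left (hF.of_mem_Icc ht) (hF.of_mem_Icc hs)]
  exact norm_integral_le_of_norm_le_const fun x hx =>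
    hFM x (uIcc_subset_Icc hs ht (uIoc_subset_uIcc hx))

lemma ae_hasDerivAt_of_eq_add_integral [CompleteSpace E] (hF : IntervalIntegrable F volume a b)
    (hy : ∀ t ∈ Icc a b, y t = y a + ∫ τ in a..t, F τ) :
    ∀ᵐ t, t ∈ Ioo a b → HasDerivAt y (F t) t := by
  filter_upwards [hF.ae_hasDerivAt_integral] with t hderiv ht
  have hprim := hderiv (Icc_subset_uIcc (Ioo_subset_Icc_self ht)) a left_mem_uIcc
  exact (hprim.const_add (y a)).congr_of_eventuallyEq
    (Filter.eventually_of_mem (Icc_mem_nhds ht.1 ht.2) hy)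

end Primitive

section Pi

variable {ι : Type*} [Fintype ι] {a b : ℝ}

lemma intervalIntegrable_pi_iff {E : ι → Type*} [∀ i, NormedAddCommGroup (E i)]
    {F : ℝ → ∀ i, E i} :
    IntervalIntegrable F volume a b ↔ ∀ i, IntervalIntegrable (fun t => F t i) volume a b := by
  simp only [intervalIntegrable_iff, IntegrableOn, integrable_pi_iff]

lemma intervalIntegral_apply {E : ι → Type*} [∀ i, NormedAddCommGroup (E i)]
    [∀ i, NormedSpace ℝ (E i)] [∀ i, CompleteSpace (E i)] {F : ℝ → ∀ i, E i}
    (hF : IntervalIntegrable F volume a b) (i : ι) :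
    (∫ t in a..b, F t) i = ∫ t in a..b, F t i :=
  ((ContinuousLinearMap.proj (R := ℝ) (φ := E) i).intervalIntegral_comp_comm hF).symm

lemma eq_add_integral_of_forall_apply {y F : ℝ → ι → ℝ} (hF : IntervalIntegrable F volume a b)
    (hy : ∀ t ∈ Icc a b, ∀ i, y t i = y a i + ∫ τ in a..t, F τ i) :
    ∀ t ∈ Icc a b, y t = y a + ∫ τ in a..t, F τ := fun t ht => funext fun i => by
  rw [hy t ht i, Pi.add_apply, intervalIntegral_apply (hF.of_mem_Icc ht)]

lemma norm_le_one_of_forall_mem_Icc {δ : ι → ℝ} (hδ : ∀ i, δ i ∈ Icc (-1 : ℝ) 1) : ‖δ‖ ≤ 1 :=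
  (pi_norm_le_iff_of_nonneg zero_le_one).2 fun i => abs_le.2 (hδ i)

end Pi

lemma IsCompact.exists_norm_add_mul_le {X R : Type*} [TopologicalSpace X]
    [NonUnitalSeminormedRing R] {s : Set X} (hs : IsCompact s) {u w d : X → R}
    (hu : ContinuousOn u s) (hw : ContinuousOn w s) (hd : ∀ x ∈ s, ‖d x‖ ≤ 1) :
    ∃ M : ℝ≥0, ∀ x ∈ s, ‖u x + w x * d x‖ ≤ M := by
  obtain ⟨C, hC⟩ := hs.exists_bound_of_continuousOn (hu.norm.add hw.norm)
  refine ⟨C.toNNReal, fun x hx => ?_⟩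
  calc ‖u x + w x * d x‖ ≤ ‖u x‖ + ‖w x‖ * ‖d x‖ :=
        (norm_add_le _ _).trans (by gcongr; exact norm_mul_le _ _)
    _ ≤ ‖u x‖ + ‖w x‖ := by
        gcongr; exact mul_le_of_le_one_right (norm_nonneg _) (hd x hx)
    _ ≤ C := (le_abs_self _).trans (hC x hx)
    _ ≤ C.toNNReal := Real.le_coe_toNNReal C

section Dissipation

variable {E : Type*} [NormedAddCommGroup E] [NormedSpace ℝ E] {v : E → ℝ} {γ G : ℝ → E}
  {a b : ℝ} {K : ℝ≥0}

lemma ContDiff.exists_lipschitzOnWith_comp (hv : ContDiff ℝ 1 v) {s : Set ℝ} (hs : IsCompact s)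
    (hγ : LipschitzOnWith K γ s) : ∃ L, LipschitzOnWith L (v ∘ γ) s := by
  obtain ⟨Kv, hKv⟩ := hv.locallyLipschitz.locallyLipschitzOn.exists_lipschitzOnWith_of_compact
    (hs.image_of_continuousOn hγ.continuousOn)
  exact ⟨Kv * K, hKv.comp hγ (mapsTo_image γ s)⟩

theorem ContDiff.antitoneOn_comp_of_fderiv_nonpos (hv : ContDiff ℝ 1 v) (hγ : LipschitzOnWith K γ (Icc a b))
    (hγ' : ∀ᵐ t, t ∈ Ioo a b → HasDerivAt γ (G t) t)
    (hvG : ∀ t ∈ Ioo a b, fderiv ℝ v (γ t) (G t) ≤ 0) : AntitoneOn (v ∘ γ) (Icc a b) := by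
  obtain ⟨L, hL⟩ := hv.exists_lipschitzOnWith_comp isCompact_Icc hγ
  intro s hs t ht hst
  have hac : AbsolutelyContinuousOnInterval (v ∘ γ) s t :=
    (hL.mono (uIcc_subset_Icc hs ht)).absolutelyContinuousOnInterval
  have hderiv : ∀ᵐ x ∂volume.restrict (Icc s t), deriv (v ∘ γ) x ≤ 0 := by
    rw [ae_restrict_iff' measurableSet_Icc]
    filter_upwards [hγ', Measure.ae_ne volume a, Measure.ae_ne volume b] with x hγx hxa hxb hx
    have hx' : x ∈ Ioo a b := ⟨lt_of_le_of_ne (hs.1.trans hx.1) (Ne.symm hxa),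
      lt_of_le_of_ne (hx.2.trans ht.2) hxb⟩
    rw [((hv.differentiable one_ne_zero (γ x)).hasFDerivAt.comp_hasDerivAt x (hγx hx')).deriv]
    exact hvG x hx'
  have hint := integral_nonneg_of_ae_restrict hst (hderiv.mono fun x hx => neg_nonneg.2 hx)
  rw [intervalIntegral.integral_neg, hac.integral_deriv_eq_sub] at hint
  linarith

end Dissipation

theorem SubsysDissipation.nonpos_along_trajectory {ni ns m : ℕ} {T : ℝ}
    {Zi Z0i : Set ((Fin ni → ℝ) × (Fin ns → ℝ))} {K : Set (Fin m → ℝ)}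
    {fi gi : ℝ × (Fin ni → ℝ) × (Fin ns → ℝ) × (Fin m → ℝ) → (Fin ni → ℝ)}
    {fs gs : ℝ × (Fin ns → ℝ) × (Fin m → ℝ) → (Fin ns → ℝ)}
    {vi : ℝ × ((Fin ni → ℝ) × (Fin ns → ℝ)) × (Fin m → ℝ) → ℝ}
    (hv : SubsysDissipation T Zi Z0i K fi gi fs gs vi)
    (hfi : Continuous fi) (hgi : Continuous gi) (hfs : Continuous fs) (hgs : Continuous gs)
    {k : Fin m → ℝ} (hk : k ∈ K) {z d : ℝ → Fin ni → ℝ} {zs ds : ℝ → Fin ns → ℝ}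
    (hmem : ∀ t ∈ Icc (0:ℝ) T, (z t, zs t) ∈ Zi) (hmem₀ : (z 0, zs 0) ∈ Z0i)
    (hd : ∀ t i, d t i ∈ Icc (-1:ℝ) 1) (hds : ∀ t i, ds t i ∈ Icc (-1:ℝ) 1)
    (hint : ∀ i, IntervalIntegrable
      (fun τ => fi (τ, z τ, zs τ, k) i + gi (τ, z τ, zs τ, k) i * d τ i) volume 0 T)
    (hints : ∀ i, IntervalIntegrable
      (fun τ => fs (τ, zs τ, k) i + gs (τ, zs τ, k) i * ds τ i) volume 0 T)
    (hz : ∀ t ∈ Icc (0:ℝ) T, ∀ i, z t i = z 0 i + ∫ τ in (0:ℝ)..t,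
      (fi (τ, z τ, zs τ, k) i + gi (τ, z τ, zs τ, k) i * d τ i))
    (hzs : ∀ t ∈ Icc (0:ℝ) T, ∀ i, zs t i = zs 0 i + ∫ τ in (0:ℝ)..t,
      (fs (τ, zs τ, k) i + gs (τ, zs τ, k) i * ds τ i)) :
    ∀ t ∈ Icc (0:ℝ) T, vi (t, (z t, zs t), k) ≤ 0 := by
  obtain ⟨hvC, hvG, hv₀⟩ := hv
  set F : ℝ → Fin ni → ℝ := fun τ => fi (τ, z τ, zs τ, k) + gi (τ, z τ, zs τ, k) * d τ
  set Fs : ℝ → Fin ns → ℝ := fun τ => fs (τ, zs τ, k) + gs (τ, zs τ, k) * ds τ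
  have hF : IntervalIntegrable F volume 0 T := intervalIntegrable_pi_iff.2 hint
  have hFs : IntervalIntegrable Fs volume 0 T := intervalIntegrable_pi_iff.2 hints
  have hz' := eq_add_integral_of_forall_apply hF hz
  have hzs' := eq_add_integral_of_forall_apply hFs hzs
  have hzc := continuousOn_of_eq_add_integral hF hz'
  have hzsc := continuousOn_of_eq_add_integral hFs hzs'
  have hpath : ContinuousOn (fun τ => (τ, z τ, zs τ, k)) (Icc 0 T) :=
    continuousOn_id.prodMk (hzc.prodMk (hzsc.prodMk continuousOn_const))
  have hpaths : ContinuousOn (fun τ => (τ, zs τ, k)) (Icc 0 T) :=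
    continuousOn_id.prodMk (hzsc.prodMk continuousOn_const)
  obtain ⟨M, hM⟩ := isCompact_Icc.exists_norm_add_mul_le (hfi.comp_continuousOn hpath)
    (hgi.comp_continuousOn hpath) fun t _ => norm_le_one_of_forall_mem_Icc (hd t)
  obtain ⟨Ms, hMs⟩ := isCompact_Icc.exists_norm_add_mul_le (hfs.comp_continuousOn hpaths)
    (hgs.comp_continuousOn hpaths) fun t _ => norm_le_one_of_forall_mem_Icc (hds t)
  have hγ : LipschitzOnWith _ (fun t => (t, (z t, zs t), k)) (Icc 0 T) :=
    LipschitzWith.id.lipschitzOnWith.prodMk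
      (((lipschitzOnWith_of_eq_add_integral hF hM hz').prodMk
        (lipschitzOnWith_of_eq_add_integral hFs hMs hzs')).prodMk
        (LipschitzWith.const k).lipschitzOnWith)
  have hγ' : ∀ᵐ t, t ∈ Ioo 0 T →
      HasDerivAt (fun t => (t, (z t, zs t), k)) (1, (F t, Fs t), 0) t := by
    filter_upwards [ae_hasDerivAt_of_eq_add_integral hF hz',
      ae_hasDerivAt_of_eq_add_integral hFs hzs'] with t hzt hzst ht
    exact (hasDerivAt_id t).prodMk (((hzt ht).prodMk (hzst ht)).prodMk (hasDerivAt_const t k))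
  have hanti := hvC.antitoneOn_comp_of_fderiv_nonpos hγ hγ' fun t ht =>
    hvG t (Ioo_subset_Icc_self ht) _ _ (hmem t (Ioo_subset_Icc_self ht)) k hk _ _ (hd t) (hds t)
  intro t ht
  exact (hanti ⟨le_rfl, ht.1.trans ht.2⟩ ht ht.1).trans (hv₀ _ hmem₀ k hk)

theorem reconstruction_contains_frs_general {n₁ n₂ ns m : ℕ} {T : ℝ}
    (Z Z₀ : Set ((Fin (n₁+1) → ℝ) × (Fin (n₂+1) → ℝ) × (Fin ns → ℝ)))
    (K : Set (Fin m → ℝ))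
    (Z₁ Z01 : Set ((Fin (n₁+1) → ℝ) × (Fin ns → ℝ)))
    (Z₂ Z02 : Set ((Fin (n₂+1) → ℝ) × (Fin ns → ℝ)))
    (hZ₁ : (fun ζ : (Fin (n₁+1) → ℝ) × (Fin (n₂+1) → ℝ) × (Fin ns → ℝ) =>
      (ζ.1, ζ.2.2)) '' Z ⊆ Z₁)
    (hZ01 : (fun ζ : (Fin (n₁+1) → ℝ) × (Fin (n₂+1) → ℝ) × (Fin ns → ℝ) =>
      (ζ.1, ζ.2.2)) '' Z₀ ⊆ Z01)
    (hZ₂ : (fun ζ : (Fin (n₁+1) → ℝ) × (Fin (n₂+1) → ℝ) × (Fin ns → ℝ) =>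
      (ζ.2.1, ζ.2.2)) '' Z ⊆ Z₂)
    (hZ02 : (fun ζ : (Fin (n₁+1) → ℝ) × (Fin (n₂+1) → ℝ) × (Fin ns → ℝ) =>
      (ζ.2.1, ζ.2.2)) '' Z₀ ⊆ Z02)
    (f₁ g₁ : ℝ × (Fin (n₁+1) → ℝ) × (Fin ns → ℝ) × (Fin m → ℝ) → (Fin (n₁+1) → ℝ))
    (f₂ g₂ : ℝ × (Fin (n₂+1) → ℝ) × (Fin ns → ℝ) × (Fin m → ℝ) → (Fin (n₂+1) → ℝ))
    (fs gs : ℝ × (Fin ns → ℝ) × (Fin m → ℝ) → (Fin ns → ℝ))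
    (hf₁ : Continuous f₁) (hg₁ : Continuous g₁)
    (hf₂ : Continuous f₂) (hg₂ : Continuous g₂)
    (hfs : Continuous fs) (hgs : Continuous gs)
    (v₁ : ℝ × ((Fin (n₁+1) → ℝ) × (Fin ns → ℝ)) × (Fin m → ℝ) → ℝ)
    (v₂ : ℝ × ((Fin (n₂+1) → ℝ) × (Fin ns → ℝ)) × (Fin m → ℝ) → ℝ)
    (hv₁ : SubsysDissipation T Z₁ Z01 K f₁ g₁ fs gs v₁)
    (hv₂ : SubsysDissipation T Z₂ Z02 K f₂ g₂ fs gs v₂)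
    (wr : (ℝ × ℝ) × (Fin m → ℝ) → ℝ)
    (hwr : ∀ t ∈ Icc (0:ℝ) T, ∀ ζ ∈ Z, ∀ k ∈ K,
      v₁ (t, (ζ.1, ζ.2.2), k) ≤ 0 → v₂ (t, (ζ.2.1, ζ.2.2), k) ≤ 0 →
      1 ≤ wr ((ζ.1 0, ζ.2.1 0), k)) :
    ∀ k ∈ K, ∀ ζ : ℝ → (Fin (n₁+1) → ℝ) × (Fin (n₂+1) → ℝ) × (Fin ns → ℝ),
      IsAdmissibleFull T Z Z₀ f₁ g₁ f₂ g₂ fs gs k ζ →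
      ∀ τ ∈ Icc (0:ℝ) T, 1 ≤ wr (((ζ τ).1 0, (ζ τ).2.1 0), k) := by
  rintro k hk ζ ⟨hZ, hZ0, d, -, hd₁, hd₂, hds, hint₁, hint₂, hints, hrep₁, hrep₂, hreps⟩ τ hτ
  refine hwr τ hτ (ζ τ) (hZ τ hτ) k hk ?_ ?_
  · exact hv₁.nonpos_along_trajectory hf₁ hg₁ hfs hgs hk (fun t ht => hZ₁ ⟨ζ t, hZ t ht, rfl⟩)
      (hZ01 ⟨ζ 0, hZ0, rfl⟩) hd₁ hds hint₁ hints hrep₁ hreps τ hτ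
  · exact hv₂.nonpos_along_trajectory hf₂ hg₂ hfs hgs hk (fun t ht => hZ₂ ⟨ζ t, hZ t ht, rfl⟩)
      (hZ02 ⟨ζ 0, hZ0, rfl⟩) hd₂ hds hint₂ hints hrep₂ hreps τ hτ

/-- Reconstruction theorem: if `v₁, v₂` satisfy the subsystem dissipation constraints and
`w_r(π(ζ), k) ≥ 1` whenever `v₁(t, proj₁ ζ, k) ≤ 0` and `v₂(t, proj₂ ζ, k) ≤ 0` on
`[0,T] × Z × K`, then the forward reachable set of the full system is contained in the
`1`-superlevel set of `w_r`. -/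
theorem reconstruction_contains_frs {n₁ n₂ ns m : ℕ} {T : ℝ} (hT : 0 < T)
    (Z Z₀ : Set ((Fin (n₁+1) → ℝ) × (Fin (n₂+1) → ℝ) × (Fin ns → ℝ))) (hZ₀ : Z₀ ⊆ Z)
    (K : Set (Fin m → ℝ))
    (Z₁ Z01 : Set ((Fin (n₁+1) → ℝ) × (Fin ns → ℝ)))
    (Z₂ Z02 : Set ((Fin (n₂+1) → ℝ) × (Fin ns → ℝ)))
    (hZ₁ : (fun ζ : (Fin (n₁+1) → ℝ) × (Fin (n₂+1) → ℝ) × (Fin ns → ℝ) =>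
      (ζ.1, ζ.2.2)) '' Z ⊆ Z₁)
    (hZ01 : (fun ζ : (Fin (n₁+1) → ℝ) × (Fin (n₂+1) → ℝ) × (Fin ns → ℝ) =>
      (ζ.1, ζ.2.2)) '' Z₀ ⊆ Z01)
    (hZ₂ : (fun ζ : (Fin (n₁+1) → ℝ) × (Fin (n₂+1) → ℝ) × (Fin ns → ℝ) =>
      (ζ.2.1, ζ.2.2)) '' Z ⊆ Z₂)
    (hZ02 : (fun ζ : (Fin (n₁+1) → ℝ) × (Fin (n₂+1) → ℝ) × (Fin ns → ℝ) =>
      (ζ.2.1, ζ.2.2)) '' Z₀ ⊆ Z02)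
    (f₁ g₁ : ℝ × (Fin (n₁+1) → ℝ) × (Fin ns → ℝ) × (Fin m → ℝ) → (Fin (n₁+1) → ℝ))
    (f₂ g₂ : ℝ × (Fin (n₂+1) → ℝ) × (Fin ns → ℝ) × (Fin m → ℝ) → (Fin (n₂+1) → ℝ))
    (fs gs : ℝ × (Fin ns → ℝ) × (Fin m → ℝ) → (Fin ns → ℝ))
    (hf₁ : Continuous f₁) (hg₁ : Continuous g₁)
    (hf₂ : Continuous f₂) (hg₂ : Continuous g₂)
    (hfs : Continuous fs) (hgs : Continuous gs)
    (v₁ : ℝ × ((Fin (n₁+1) → ℝ) × (Fin ns → ℝ)) × (Fin m → ℝ) → ℝ)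
    (v₂ : ℝ × ((Fin (n₂+1) → ℝ) × (Fin ns → ℝ)) × (Fin m → ℝ) → ℝ)
    (hv₁ : SubsysDissipation T Z₁ Z01 K f₁ g₁ fs gs v₁)
    (hv₂ : SubsysDissipation T Z₂ Z02 K f₂ g₂ fs gs v₂)
    (wr : (ℝ × ℝ) × (Fin m → ℝ) → ℝ)
    (hwr : ∀ t ∈ Icc (0:ℝ) T, ∀ ζ ∈ Z, ∀ k ∈ K,
      v₁ (t, (ζ.1, ζ.2.2), k) ≤ 0 → v₂ (t, (ζ.2.1, ζ.2.2), k) ≤ 0 →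
      1 ≤ wr ((ζ.1 0, ζ.2.1 0), k)) :
    ∀ k ∈ K, ∀ ζ : ℝ → (Fin (n₁+1) → ℝ) × (Fin (n₂+1) → ℝ) × (Fin ns → ℝ),
      IsAdmissibleFull T Z Z₀ f₁ g₁ f₂ g₂ fs gs k ζ →
      ∀ τ ∈ Icc (0:ℝ) T, 1 ≤ wr (((ζ τ).1 0, (ζ τ).2.1 0), k) :=
  reconstruction_contains_frs_general Z Z₀ K Z₁ Z01 Z₂ Z02 hZ₁ hZ01 hZ₂ hZ02 f₁ g₁ f₂ g₂ fs gs hf₁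
    hg₁ hf₂ hg₂ hfs hgs v₁ v₂ hv₁ hv₂ wr hwr
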